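/- Trace concatenation through residuals: if E is a cause-respecting RPES, t ∈ Traces(E), E' = E \ t, and t' ∈ Traces(E'), then tt' ∈ Traces(E), and moreover E \ (tt') = E' \ t'. -/

import Mathlib

/-- Data of a (labeled) reversible prime event structure (RPES) over actions `L`:
a carrier set of events, causality `lt`, conflict `conf`, labeling, a set `F` of
reversible events, reverse causality `rc` (`rc e u` means `e ≺ u̲`), prevention
`prev` (`prev e u` means `e ▷ u̲`), and an initial configuration `C0`. -/
structure RPESData (E : Type) (L : Type) where
  carrier : Set E
  lt : E → E → Prop
  conf : E → E → Prop
  label : E → L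
  F : Set E
  rc : E → E → Prop
  prev : E → E → Prop
  C0 : Set E

/-- Data of a (labeled) prime event structure (PES) with empty initial configuration. -/
structure PESData (E : Type) (L : Type) where
  carrier : Set E
  lt : E → E → Prop
  conf : E → E → Prop
  label : E → L

namespace RPESData

variable {E : Type} {L : Type}

/-- A set of events is conflict-free. -/
def ConflictFree (R : RPESData E L) (X : Set E) : Prop :=
  ∀ e ∈ X, ∀ e' ∈ X, ¬ R.conf e e'

/-- Sustained causation: `a ≪ b` iff `a < b` and, if `a` is reversible, `b ▷ a̲`. -/
def SC (R : RPESData E L) (a b : E) : Prop :=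
  R.lt a b ∧ (a ∈ R.F → R.prev b a)

/-- The axioms of a reversible prime event structure. -/
structure IsRPES (R : RPESData E L) : Prop where
  countable : R.carrier.Countable
  lt_carrier : ∀ a b, R.lt a b → a ∈ R.carrier ∧ b ∈ R.carrier
  conf_carrier : ∀ a b, R.conf a b → a ∈ R.carrier ∧ b ∈ R.carrier
  conf_irrefl : ∀ a, ¬ R.conf a a
  conf_symm : ∀ a b, R.conf a b → R.conf b a
  lt_irrefl : ∀ a, ¬ R.lt a a
  lt_trans : ∀ a b c, R.lt a b → R.lt b c → R.lt a c
  causes_finite : ∀ e, {e' | R.lt e' e}.Finite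
  causes_cf : ∀ e, R.ConflictFree {e' | R.lt e' e}
  F_carrier : R.F ⊆ R.carrier
  rc_carrier : ∀ a b, R.rc a b → a ∈ R.carrier ∧ b ∈ R.F
  rc_refl : ∀ u ∈ R.F, R.rc u u
  rcauses_finite : ∀ u ∈ R.F, {e | R.rc e u}.Finite
  rcauses_cf : ∀ u ∈ R.F, R.ConflictFree {e | R.rc e u}
  prev_carrier : ∀ a b, R.prev a b → a ∈ R.carrier ∧ b ∈ R.F
  prev_rc_disjoint : ∀ a b, ¬ (R.prev a b ∧ R.rc a b)
  sc_trans : ∀ a b c, R.SC a b → R.SC b c → R.SC a c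
  conf_hered_sc : ∀ a b c, R.conf a b → R.SC b c → R.conf a c
  C0_carrier : R.C0 ⊆ R.carrier
  C0_finite : R.C0.Finite
  C0_closed : ∀ e ∈ R.C0, ∀ e', R.lt e' e → e' ∈ R.C0
  C0_cf : R.ConflictFree R.C0

/-- A cause-respecting RPES: causality is sustained causation. -/
def CauseRespecting (R : RPESData E L) : Prop :=
  ∀ a b, R.lt a b → R.SC a b

/-- A causal RPES. -/
def Causal (R : RPESData E L) : Prop :=
  (∀ e, ∀ u ∈ R.F, (R.rc e u ↔ e = u)) ∧
  (∀ e, ∀ u ∈ R.F, (R.prev e u ↔ R.lt u e))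

/-- The mixed step `A ∪ B̲` is enabled at configuration `C`. -/
def Enabled (R : RPESData E L) (C A B : Set E) : Prop :=
  A.Finite ∧ B.Finite ∧ A ⊆ R.carrier ∧ B ⊆ R.F ∧
  A ∩ C = ∅ ∧ B ⊆ C ∧ R.ConflictFree (C ∪ A) ∧
  (∀ e ∈ A, ∀ e', R.lt e' e → e' ∈ C \ B) ∧
  (∀ e ∈ B, ∀ e', R.rc e' e → e' ∈ C \ (B \ {e})) ∧
  (∀ e ∈ B, ∀ e', R.prev e' e → e' ∉ C ∪ A)

/-- `IsTraceFrom R C t C'`: the sequence of mixed steps `t` can be executed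
starting at `C`, ending in `C'`. -/
def IsTraceFrom (R : RPESData E L) : Set E → List (Set E × Set E) → Set E → Prop
  | C, [], C' => C' = C
  | C, p :: t, C' => R.Enabled C p.1 p.2 ∧ R.IsTraceFrom ((C \ p.2) ∪ p.1) t C'

/-- `t` is a trace of `R` with `last(t) = C`. -/
def IsTraceTo (R : RPESData E L) (t : List (Set E × Set E)) (C : Set E) : Prop :=
  R.IsTraceFrom R.C0 t C

/-- `t` is a trace of `R`. -/
def IsTrace (R : RPESData E L) (t : List (Set E × Set E)) : Prop :=
  ∃ C, R.IsTraceTo t C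

/-- Reachable configurations: obtained from `C0` by mixed steps. -/
inductive ReachConf (R : RPESData E L) : Set E → Prop
  | init : ReachConf R R.C0
  | step : ∀ C A B, ReachConf R C → R.Enabled C A B → ReachConf R ((C \ B) ∪ A)

/-- Forwards reachable configurations: obtained from `C0` by forward steps only. -/
inductive FwdReachConf (R : RPESData E L) : Set E → Prop
  | init : FwdReachConf R R.C0
  | step : ∀ C A, FwdReachConf R C → R.Enabled C A ∅ → FwdReachConf R ((C \ ∅) ∪ A)

/-- The one-step removal operator: the residual of `R` after the step `A ∪ B̲`. -/
def residStep (R : RPESData E L) (A B : Set E) : RPESData E L :=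
  let At : Set E := (A \ R.F) ∪ {a | a ∈ R.F ∧ ∃ x ∈ A \ R.F, R.lt a x}
  let CA : Set E := {e | e ∈ R.carrier ∧ ∃ a ∈ At, R.conf e a}
  let E' : Set E := R.carrier \ (At ∪ CA)
  let F' : Set E := (R.F ∩ E') \
    ({e | e ∈ R.F ∧ ∃ a ∈ CA, R.rc a e} ∪ {e | e ∈ R.F ∧ ∃ a ∈ At, R.prev a e})
  { carrier := E'
    lt := fun a b => R.lt a b ∧ a ∈ E' ∧ b ∈ E'
    conf := fun a b => R.conf a b ∧ a ∈ E' ∧ b ∈ E'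
    label := R.label
    F := F'
    rc := fun a b => R.rc a b ∧ a ∈ E' ∧ b ∈ F'
    prev := fun a b => R.prev a b ∧ a ∈ E' ∧ b ∈ F'
    C0 := ((R.C0 \ B) ∪ A) ∩ E' }

/-- The residual `R \ t` of `R` after a trace `t`. -/
def resid (R : RPESData E L) (t : List (Set E × Set E)) : RPESData E L :=
  t.foldl (fun S p => S.residStep p.1 p.2) R

/-- The multiset (as a function `L → ℕ`) of action labels of the step `A ∪ B̲`. -/
noncomputable def stepLabel (R : RPESData E L) (A B : Set E) : L → ℕ :=
  fun a => Nat.card {e : E // e ∈ A ∪ B ∧ R.label e = a}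

/-- Forgetting the reversibility structure. -/
def toPES (R : RPESData E L) : PESData E L :=
  ⟨R.carrier, R.lt, R.conf, R.label⟩

end RPESData

namespace PESData

variable {E : Type} {L : Type}

/-- The axioms of a prime event structure. -/
structure IsPES (P : PESData E L) : Prop where
  countable : P.carrier.Countable
  lt_carrier : ∀ a b, P.lt a b → a ∈ P.carrier ∧ b ∈ P.carrier
  conf_carrier : ∀ a b, P.conf a b → a ∈ P.carrier ∧ b ∈ P.carrier
  lt_irrefl : ∀ a, ¬ P.lt a a
  lt_trans : ∀ a b c, P.lt a b → P.lt b c → P.lt a c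
  causes_finite : ∀ e, {e' | P.lt e' e}.Finite
  conf_irrefl : ∀ a, ¬ P.conf a a
  conf_symm : ∀ a b, P.conf a b → P.conf b a
  conf_hered : ∀ a b c, P.conf a b → P.lt b c → P.conf a c

/-- `φ(E, F)`: the RPES obtained from a PES by declaring the events in `F`
reversible, with `e ≺ e̲` for `e ∈ F` and `e ▷ e̲'` whenever `e' ∈ F`, `e' < e`. -/
def toRPES (P : PESData E L) (F : Set E) : RPESData E L :=
  { carrier := P.carrier
    lt := P.lt
    conf := P.conf
    label := P.label
    F := F
    rc := fun e u => u ∈ F ∧ e = u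
    prev := fun e u => u ∈ F ∧ P.lt u e
    C0 := ∅ }

end PESData

/-- A labeled transition system. -/
structure LTS (S : Type) (Λ : Type) where
  tr : S → Λ → S → Prop
  init : S

/-- Bisimulation between labeled transition systems. -/
def IsBisimulation {S S' Λ : Type} (T : LTS S Λ) (T' : LTS S' Λ)
    (Rl : S → S' → Prop) : Prop :=
  Rl T.init T'.init ∧
  (∀ s s', Rl s s' → ∀ M s₁, T.tr s M s₁ → ∃ s₁', T'.tr s' M s₁' ∧ Rl s₁ s₁') ∧
  (∀ s s', Rl s s' → ∀ M s₁', T'.tr s' M s₁' → ∃ s₁, T.tr s M s₁ ∧ Rl s₁ s₁')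

namespace RPESData

variable {E : Type} {L : Type}

/-- Transition relation of the configuration transition system `TC(R)`. -/
def confTr (R : RPESData E L) (C : Set E) (M : L → ℕ) (C' : Set E) : Prop :=
  R.ReachConf C ∧ ∃ A B, R.Enabled C A B ∧ C' = (C \ B) ∪ A ∧ M = R.stepLabel A B

/-- The configuration transition system `TC(R)`. -/
def TC (R : RPESData E L) : LTS (Set E) (L → ℕ) :=
  ⟨R.confTr, R.C0⟩

/-- Transition relation between residuals: `F ⇀^M F'` iff `F' = F \ (A ∪ B̲)` for
a one-step trace `A ∪ B̲` of `F` with label multiset `M`. -/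
def residTr (R' : RPESData E L) (M : L → ℕ) (R'' : RPESData E L) : Prop :=
  ∃ A B, R'.Enabled R'.C0 A B ∧ R'' = R'.residStep A B ∧ M = R'.stepLabel A B

/-- Residuals reachable from `R` via `residTr`. -/
inductive ReachRes (R : RPESData E L) : RPESData E L → Prop
  | init : ReachRes R R
  | step : ∀ R' M R'', ReachRes R R' → residTr R' M R'' → ReachRes R R''

/-- The residual transition system `TE(R)`. -/
def TE (R : RPESData E L) : LTS (RPESData E L) (L → ℕ) :=
  ⟨residTr, R⟩

end RPESData

/-!
Let `C` be the configuration reached by `t` in `R`. The residual `R \ t`, run from its initial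
configuration `C ∩ carrier`, behaves like `R` run from `C`: every event deleted along `t` is
either *pinned* (it lies in `C` and no step can ever remove it) or *blocked* (it conflicts with a
pinned event, so no step can ever add it), and every event that lost its reversibility has a
blocked reverse cause or a pinned preventer. Cause-respection is used twice: conflict is
inherited along causality, so an event with a cause deleted for a conflict is deleted as well;
and an executed irreversible event prevents the reversal of its reversible causes, which are
therefore pinned.
These facts keep `C ∩ carrier` closed under the causes that `R \ t` forgets, so every step
enabled in `R \ t` is enabled in `R`, and `t'` lifts to a trace of `R` after `t`. The equation for
the residuals is associativity of the fold defining `resid`.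
-/

namespace RPESData

variable {E L : Type} {R R₁ : RPESData E L} {C A B : Set E}

theorem ConflictFree.mono {X Y : Set E} (hY : R.ConflictFree Y) (hXY : X ⊆ Y) :
    R.ConflictFree X :=
  fun e he e' he' => hY e (hXY he) e' (hXY he')

theorem mem_or_mem_diff_of_subset {X : Set E} {d : E} (hB : B ⊆ X) (hd : d ∈ X ∨ d ∈ C) :
    d ∈ X ∨ d ∈ C \ B := by
  by_cases hdB : d ∈ B
  · exact Or.inl (hB hdB)
  · exact hd.imp_right fun hdC => ⟨hdC, hdB⟩

theorem Enabled.fst_subset (hen : R.Enabled C A B) : A ⊆ R.carrier := hen.2.2.1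

theorem Enabled.snd_subset (hen : R.Enabled C A B) : B ⊆ R.F := hen.2.2.2.1

theorem Enabled.conflictFree (hen : R.Enabled C A B) : R.ConflictFree (C ∪ A) :=
  hen.2.2.2.2.2.2.1

theorem resid_append (R : RPESData E L) (t t' : List (Set E × Set E)) :
    R.resid (t ++ t') = (R.resid t).resid t' :=
  List.foldl_append

theorem isTraceFrom_append {C C' C'' : Set E} :
    ∀ {t t' : List (Set E × Set E)},
      R.IsTraceFrom C t C' → R.IsTraceFrom C' t' C'' → R.IsTraceFrom C (t ++ t') C'' := by
  intro t
  induction t generalizing C with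
  | nil => rintro t' rfl h'; exact h'
  | cons p t ih => rintro t' ⟨hen, h⟩ h'; exact ⟨hen, ih h h'⟩

-- `committed A` and `disabled A` are the sets `At` and `CA` deleted by `residStep A B`.
def committed (R : RPESData E L) (A : Set E) : Set E :=
  (A \ R.F) ∪ {a | a ∈ R.F ∧ ∃ x ∈ A \ R.F, R.lt a x}

def disabled (R : RPESData E L) (A : Set E) : Set E :=
  {e | e ∈ R.carrier ∧ ∃ a ∈ R.committed A, R.conf e a}

theorem mem_residStep_carrier {x : E} :
    x ∈ (R.residStep A B).carrier ↔
      x ∈ R.carrier ∧ x ∉ R.committed A ∧ x ∉ R.disabled A := by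
  show x ∈ R.carrier \ (R.committed A ∪ R.disabled A) ↔ _
  simp only [Set.mem_sdiff, Set.mem_union, not_or]

theorem mem_committed_or_disabled {x : E} (hx : x ∈ R.carrier)
    (hx' : x ∉ (R.residStep A B).carrier) : x ∈ R.committed A ∨ x ∈ R.disabled A := by
  rw [mem_residStep_carrier] at hx'
  tauto

theorem mem_residStep_F {u : E} :
    u ∈ (R.residStep A B).F ↔
      u ∈ R.F ∧ u ∈ (R.residStep A B).carrier ∧ (∀ a ∈ R.disabled A, ¬ R.rc a u) ∧
        ∀ a ∈ R.committed A, ¬ R.prev a u := by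
  show u ∈ (R.F ∩ (R.residStep A B).carrier) \
      ({e | e ∈ R.F ∧ ∃ a ∈ R.disabled A, R.rc a e} ∪
        {e | e ∈ R.F ∧ ∃ a ∈ R.committed A, R.prev a e}) ↔ _
  simp only [Set.mem_sdiff, Set.mem_inter_iff, Set.mem_union, Set.mem_ofPred_eq]
  grind

theorem residStep_carrier_subset : (R.residStep A B).carrier ⊆ R.carrier :=
  fun _ hx => (mem_residStep_carrier.1 hx).1

theorem residStep_C0_eq (hC0 : R.C0 = C ∩ R.carrier) :
    (R.residStep A B).C0 = ((C \ B) ∪ A) ∩ (R.residStep A B).carrier := by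
  show ((R.C0 \ B) ∪ A) ∩ (R.residStep A B).carrier = _
  ext x
  have hx : x ∈ (R.residStep A B).carrier → x ∈ R.carrier := (residStep_carrier_subset ·)
  simp only [hC0, Set.mem_inter_iff, Set.mem_union, Set.mem_sdiff]
  tauto

theorem restrict_iff {r r₁ : E → E → Prop} {X Y X' Y' : Set E}
    (h : ∀ a b, r₁ a b ↔ r a b ∧ a ∈ X ∧ b ∈ Y) (hX : X' ⊆ X) (hY : Y' ⊆ Y) (a b : E) :
    (r₁ a b ∧ a ∈ X' ∧ b ∈ Y') ↔ (r a b ∧ a ∈ X' ∧ b ∈ Y') := by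
  rw [h]
  exact ⟨fun ⟨⟨hab, _⟩, ha, hb⟩ => ⟨hab, ha, hb⟩,
    fun ⟨hab, ha, hb⟩ => ⟨⟨hab, hX ha, hY hb⟩, ha, hb⟩⟩

structure IsRestriction (R R₁ : RPESData E L) : Prop where
  carrier_subset : R₁.carrier ⊆ R.carrier
  F_subset : R₁.F ⊆ R.F
  F_subset_carrier : R₁.F ⊆ R₁.carrier
  lt_iff : ∀ a b, R₁.lt a b ↔ R.lt a b ∧ a ∈ R₁.carrier ∧ b ∈ R₁.carrier
  conf_iff : ∀ a b, R₁.conf a b ↔ R.conf a b ∧ a ∈ R₁.carrier ∧ b ∈ R₁.carrier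
  rc_iff : ∀ a b, R₁.rc a b ↔ R.rc a b ∧ a ∈ R₁.carrier ∧ b ∈ R₁.F
  prev_iff : ∀ a b, R₁.prev a b ↔ R.prev a b ∧ a ∈ R₁.carrier ∧ b ∈ R₁.F

theorem IsRPES.isRestriction_self (h : R.IsRPES) : IsRestriction R R where
  carrier_subset := subset_rfl
  F_subset := subset_rfl
  F_subset_carrier := h.F_carrier
  lt_iff a b := ⟨fun hab => ⟨hab, h.lt_carrier a b hab⟩, And.left⟩
  conf_iff a b := ⟨fun hab => ⟨hab, h.conf_carrier a b hab⟩, And.left⟩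
  rc_iff a b := ⟨fun hab => ⟨hab, h.rc_carrier a b hab⟩, And.left⟩
  prev_iff a b := ⟨fun hab => ⟨hab, h.prev_carrier a b hab⟩, And.left⟩

theorem IsRestriction.residStep (hres : IsRestriction R R₁) :
    IsRestriction R (R₁.residStep A B) := by
  have hE : (R₁.residStep A B).carrier ⊆ R₁.carrier := residStep_carrier_subset
  have hF : (R₁.residStep A B).F ⊆ R₁.F := fun _ hu => (mem_residStep_F.1 hu).1
  exact ⟨hE.trans hres.carrier_subset, hF.trans hres.F_subset,
    fun _ hu => (mem_residStep_F.1 hu).2.1, restrict_iff hres.lt_iff hE hE,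
    restrict_iff hres.conf_iff hE hE, restrict_iff hres.rc_iff hE hF,
    restrict_iff hres.prev_iff hE hF⟩

theorem IsRestriction.committed_subset (hres : IsRestriction R R₁) (hA : A ⊆ R₁.carrier) :
    R₁.committed A ⊆ R₁.carrier := by
  rintro x (hx | ⟨hxF, -⟩)
  exacts [hA hx.1, hres.F_subset_carrier hxF]

/-- The events of `C` that no sequence of steps from `C` can remove. -/
inductive Pinned (R : RPESData E L) (C : Set E) : E → Prop
  | irreversible {c : E} : c ∈ C → c ∉ R.F → Pinned R C c
  | prevented {c w : E} : c ∈ C → R.prev w c → Pinned R C w → Pinned R C c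
  | blockedCause {c w a : E} :
      c ∈ C → R.rc w c → w ∉ C → Pinned R C a → R.conf w a → Pinned R C c

def Blocked (R : RPESData E L) (C : Set E) (w : E) : Prop :=
  w ∉ C ∧ ∃ a, Pinned R C a ∧ R.conf w a

def Frozen (R : RPESData E L) (C : Set E) (u : E) : Prop :=
  (∃ w, R.rc w u ∧ Blocked R C w) ∨ ∃ w, R.prev w u ∧ Pinned R C w

theorem Pinned.mem {c : E} (hc : Pinned R C c) : c ∈ C := by
  cases hc <;> assumption

theorem Pinned.of_frozen {c : E} (hc : c ∈ C) (hfr : Frozen R C c) : Pinned R C c := by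
  rcases hfr with ⟨w, hwc, hwC, a, ha, hwa⟩ | ⟨w, hwc, hw⟩
  exacts [.blockedCause hc hwc hwC ha hwa, .prevented hc hwc hw]

theorem Pinned.notMem_snd (hen : R.Enabled C A B) {c : E} (hc : Pinned R C c) : c ∉ B := by
  obtain ⟨-, -, -, hBF, -, -, -, -, hrc, hprev⟩ := hen
  intro hcB
  cases hc with
  | irreversible _ hcF => exact hcF (hBF hcB)
  | prevented _ hwc hw => exact hprev c hcB _ hwc (Or.inl hw.mem)
  | blockedCause _ hwc hwC _ _ => exact hwC (hrc c hcB _ hwc).1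

theorem Blocked.notMem_fst (hen : R.Enabled C A B) {w : E} (hw : Blocked R C w) : w ∉ A := by
  obtain ⟨-, a, ha, hwa⟩ := hw
  exact fun hwA => hen.conflictFree w (Or.inr hwA) a (Or.inl ha.mem) hwa

theorem Blocked.notMem_step (hen : R.Enabled C A B) {w : E} (hw : Blocked R C w) :
    w ∉ (C \ B) ∪ A := by
  rintro (hwC | hwA)
  exacts [hw.1 hwC.1, hw.notMem_fst hen hwA]

theorem Pinned.step (hen : R.Enabled C A B) {d : E} (hd : Pinned R C d) :
    Pinned R ((C \ B) ∪ A) d := by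
  have hmem : ∀ {c}, Pinned R C c → c ∈ (C \ B) ∪ A :=
    fun hc => Or.inl ⟨hc.mem, hc.notMem_snd hen⟩
  induction hd with
  | irreversible hc hcF => exact .irreversible (hmem (.irreversible hc hcF)) hcF
  | prevented hc hwc hw ih => exact .prevented (hmem (.prevented hc hwc hw)) hwc ih
  | blockedCause hc hwc hwC ha hwa iha =>
    exact .blockedCause (hmem (.blockedCause hc hwc hwC ha hwa)) hwc
      (Blocked.notMem_step hen ⟨hwC, _, ha, hwa⟩) iha hwa

theorem Blocked.step (hen : R.Enabled C A B) {w : E} (hw : Blocked R C w) :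
    Blocked R ((C \ B) ∪ A) w :=
  let ⟨_, _, ha, hwa⟩ := hw
  ⟨hw.notMem_step hen, _, ha.step hen, hwa⟩

theorem Frozen.step (hen : R.Enabled C A B) {u : E} (hu : Frozen R C u) :
    Frozen R ((C \ B) ∪ A) u := by
  rcases hu with ⟨w, hwu, hw⟩ | ⟨w, hwu, hw⟩
  exacts [Or.inl ⟨w, hwu, hw.step hen⟩, Or.inr ⟨w, hwu, hw.step hen⟩]

structure RemovalJustified (R : RPESData E L) (C : Set E) (R₁ : RPESData E L) : Prop where
  removed : ∀ d ∈ R.carrier, d ∉ R₁.carrier → Pinned R C d ∨ Blocked R C d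
  frozen : ∀ u ∈ R.F, u ∈ R₁.carrier → u ∉ R₁.F → Frozen R C u

theorem removalJustified_self (R : RPESData E L) (C : Set E) : RemovalJustified R C R where
  removed _ hd hd' := absurd hd hd'
  frozen _ hu _ hu' := absurd hu hu'

namespace RemovalJustified

theorem step (hj : RemovalJustified R C R₁) (hen : R.Enabled C A B) :
    RemovalJustified R ((C \ B) ∪ A) R₁ where
  removed d hd hd₁ := (hj.removed d hd hd₁).imp (·.step hen) (·.step hen)
  frozen u hu hu₁ hu₁' := (hj.frozen u hu hu₁ hu₁').step hen

theorem fst_subset (hj : RemovalJustified R C R₁) (hen : R.Enabled C A B) :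
    A ⊆ R₁.carrier := by
  obtain ⟨-, -, -, -, hAC, -⟩ := id hen
  intro a ha
  by_contra ha₁
  rcases hj.removed a (hen.fst_subset ha) ha₁ with hpin | hbl
  · exact (Set.eq_empty_iff_forall_notMem.1 hAC a) ⟨ha, hpin.mem⟩
  · exact hbl.notMem_fst hen ha

theorem snd_subset (h : R.IsRPES) (hj : RemovalJustified R C R₁) (hen : R.Enabled C A B) :
    B ⊆ R₁.carrier := by
  obtain ⟨-, -, -, hBF, -, hBC, -⟩ := id hen
  intro b hb
  by_contra hb₁
  rcases hj.removed b (h.F_carrier (hBF hb)) hb₁ with hpin | hbl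
  · exact hpin.notMem_snd hen hb
  · exact hbl.1 (hBC hb)

theorem pinned_of_notMem_F (hj : RemovalJustified R C R₁) {c : E} (hc : c ∈ C)
    (hc₁ : c ∈ R₁.carrier) (hcF : c ∉ R₁.F) : Pinned R C c := by
  by_cases hcR : c ∈ R.F
  · exact .of_frozen hc (hj.frozen c hcR hc₁ hcF)
  · exact .irreversible hc hcR

theorem committed_pinned (hcr : R.CauseRespecting) (hres : IsRestriction R R₁)
    (hj : RemovalJustified R ((C \ B) ∪ A) R₁) (hen : R.Enabled C A B) (hA : A ⊆ R₁.carrier) :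
    ∀ x ∈ R₁.committed A, Pinned R ((C \ B) ∪ A) x := by
  obtain ⟨-, -, -, -, -, -, -, hlt, -⟩ := hen
  have hpinA : ∀ y ∈ A \ R₁.F, Pinned R ((C \ B) ∪ A) y :=
    fun y hy => hj.pinned_of_notMem_F (Or.inr hy.1) (hA hy.1) hy.2
  rintro x (hx | ⟨hxF, y, hy, hxy⟩)
  · exact hpinA x hx
  · have hxy' : R.lt x y := ((hres.lt_iff x y).1 hxy).1
    exact .prevented (Or.inl (hlt y hy.1 x hxy'))
      ((hcr x y hxy').2 (hres.F_subset hxF)) (hpinA y hy)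

end RemovalJustified

/-- `R₁`, run from the configuration `C ∩ R₁.carrier`, stands for `R` run from `C`. -/
structure IsResidualAt (R : RPESData E L) (C : Set E) (R₁ : RPESData E L) : Prop
    extends IsRestriction R R₁ where
  conflictFree : R.ConflictFree C
  lt_closed : ∀ e ∈ R₁.carrier, ∀ d, R.lt d e → d ∈ R₁.carrier ∨ d ∈ C
  rc_closed : ∀ u ∈ R₁.F, ∀ d, R.rc d u → d ∈ R₁.carrier ∨ d ∈ C
  prev_mem : ∀ u ∈ R₁.F, ∀ d, R.prev d u → d ∈ C → d ∈ R₁.carrier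
  not_conf : ∀ d ∈ C, d ∉ R₁.carrier → ∀ e ∈ R₁.carrier, ¬ R.conf d e

theorem IsRPES.isResidualAt_self (h : R.IsRPES) : IsResidualAt R R.C0 R where
  toIsRestriction := h.isRestriction_self
  conflictFree := h.C0_cf
  lt_closed e _ d hd := Or.inl (h.lt_carrier d e hd).1
  rc_closed u _ d hd := Or.inl (h.rc_carrier d u hd).1
  prev_mem u _ d hd _ := (h.prev_carrier d u hd).1
  not_conf d _ hd e _ hde := hd (h.conf_carrier d e hde).1

namespace IsResidualAt

theorem conflictFree_union (h : R.IsRPES) (hres : IsResidualAt R C R₁)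
    (hen : R₁.Enabled (C ∩ R₁.carrier) A B) : R.ConflictFree (C ∪ A) := by
  obtain ⟨-, -, hA, -, -, -, hcf, -⟩ := hen
  have hCA : ∀ e ∈ C, ∀ e' ∈ A, ¬ R.conf e e' := by
    intro e he e' he' hee'
    by_cases he₁ : e ∈ R₁.carrier
    · exact hcf e (Or.inl ⟨he, he₁⟩) e' (Or.inr he') ((hres.conf_iff e e').2 ⟨hee', he₁, hA he'⟩)
    · exact hres.not_conf e he he₁ e' (hA he') hee'
  rintro e (he | he) e' (he' | he') hee'
  · exact hres.conflictFree e he e' he' hee'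
  · exact hCA e he e' he' hee'
  · exact hCA e' he' e he (h.conf_symm e e' hee')
  · exact hcf e (Or.inr he) e' (Or.inr he') ((hres.conf_iff e e').2 ⟨hee', hA he, hA he'⟩)

theorem enabled (h : R.IsRPES) (hres : IsResidualAt R C R₁)
    (hen : R₁.Enabled (C ∩ R₁.carrier) A B) : R.Enabled C A B := by
  obtain ⟨hAfin, hBfin, hA, hBF, hAC, hBC, -, hlt, hrc, hprev⟩ := id hen
  have hB : B ⊆ R₁.carrier := hBF.trans hres.F_subset_carrier
  refine ⟨hAfin, hBfin, hA.trans hres.carrier_subset, hBF.trans hres.F_subset, ?_,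
    fun b hb => (hBC hb).1, hres.conflictFree_union h hen, ?_, ?_, ?_⟩
  · rwa [Set.inter_comm C, ← Set.inter_assoc, Set.inter_eq_left.2 hA] at hAC
  · intro e he d hde
    rcases mem_or_mem_diff_of_subset hB (hres.lt_closed e (hA he) d hde) with hd₁ | hd
    · exact (Set.inter_sdiff_right_comm ▸ hlt e he d ((hres.lt_iff d e).2 ⟨hde, hd₁, hA he⟩)).1
    · exact hd
  · intro u hu d hdu
    rcases mem_or_mem_diff_of_subset (Set.sdiff_subset.trans hB)
      (hres.rc_closed u (hBF hu) d hdu) with hd₁ | hd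
    · exact (Set.inter_sdiff_right_comm ▸ hrc u hu d ((hres.rc_iff d u).2 ⟨hdu, hd₁, hBF hu⟩)).1
    · exact hd
  · intro u hu d hdu hd
    have hd₁ : d ∈ R₁.carrier := hd.elim (hres.prev_mem u (hBF hu) d hdu) (@hA d)
    exact hprev u hu d ((hres.prev_iff d u).2 ⟨hdu, hd₁, hBF hu⟩)
      (hd.imp_left fun hdC => ⟨hdC, hd₁⟩)

theorem step (hres : IsResidualAt R C R₁) (hen : R.Enabled C A B) (hA : A ⊆ R₁.carrier)
    (hB : B ⊆ R₁.carrier) : IsResidualAt R ((C \ B) ∪ A) R₁ where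
  toIsRestriction := hres.toIsRestriction
  conflictFree := hen.conflictFree.mono (Set.union_subset_union_left A Set.sdiff_subset)
  lt_closed e he d hde :=
    (mem_or_mem_diff_of_subset hB (hres.lt_closed e he d hde)).imp_right Or.inl
  rc_closed u hu d hdu :=
    (mem_or_mem_diff_of_subset hB (hres.rc_closed u hu d hdu)).imp_right Or.inl
  prev_mem u hu d hdu hd := hd.elim (fun hd => hres.prev_mem u hu d hdu hd.1) (@hA d)
  not_conf d hd hd₁ := hd.elim (fun hd => hres.not_conf d hd.1 hd₁) fun hdA => absurd (hA hdA) hd₁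

theorem blocked_of_mem_disabled (hres : IsResidualAt R C R₁)
    (hK : ∀ x ∈ R₁.committed A, Pinned R C x) {d : E} (hd : d ∈ R₁.disabled A) :
    Blocked R C d := by
  obtain ⟨-, a, haK, hda⟩ := hd
  have hda' : R.conf d a := ((hres.conf_iff d a).1 hda).1
  exact ⟨fun hdC => hres.conflictFree d hdC a (hK a haK).mem hda', a, hK a haK, hda'⟩

theorem residStep (h : R.IsRPES) (hcr : R.CauseRespecting) (hres : IsResidualAt R C R₁)
    (hA : A ⊆ R₁.carrier) (hK : ∀ x ∈ R₁.committed A, Pinned R C x) :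
    IsResidualAt R C (R₁.residStep A B) where
  toIsRestriction := hres.toIsRestriction.residStep
  conflictFree := hres.conflictFree
  lt_closed e he d hde := by
    obtain ⟨he₁, -, he⟩ := mem_residStep_carrier.1 he
    refine (hres.lt_closed e he₁ d hde).elim (fun hd₁ => ?_) Or.inr
    by_contra! hd
    rcases mem_committed_or_disabled hd₁ hd.1 with hdK | ⟨-, a, haK, hda⟩
    · exact hd.2 (hK d hdK).mem
    · have had : R.conf a d := h.conf_symm d a ((hres.conf_iff d a).1 hda).1
      have hae : R.conf a e := h.conf_hered_sc a d e had (hcr d e hde)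
      exact he ⟨he₁, a, haK, (hres.conf_iff e a).2
        ⟨h.conf_symm a e hae, he₁, hres.committed_subset hA haK⟩⟩
  rc_closed u hu d hdu := by
    obtain ⟨hu₁, -, hD, -⟩ := mem_residStep_F.1 hu
    refine (hres.rc_closed u hu₁ d hdu).elim (fun hd₁ => ?_) Or.inr
    by_contra! hd
    rcases mem_committed_or_disabled hd₁ hd.1 with hdK | hdD
    · exact hd.2 (hK d hdK).mem
    · exact hD d hdD ((hres.rc_iff d u).2 ⟨hdu, hd₁, hu₁⟩)
  prev_mem u hu d hdu hdC := by
    obtain ⟨hu₁, -, -, hK'⟩ := mem_residStep_F.1 hu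
    have hd₁ := hres.prev_mem u hu₁ d hdu hdC
    by_contra hd
    rcases mem_committed_or_disabled hd₁ hd with hdK | hdD
    · exact hK' d hdK ((hres.prev_iff d u).2 ⟨hdu, hd₁, hu₁⟩)
    · exact (hres.blocked_of_mem_disabled hK hdD).1 hdC
  not_conf d hdC hd e he hde := by
    obtain ⟨he₁, -, heD⟩ := mem_residStep_carrier.1 he
    by_cases hd₁ : d ∈ R₁.carrier
    · rcases mem_committed_or_disabled hd₁ hd with hdK | hdD
      · exact heD ⟨he₁, d, hdK, (hres.conf_iff e d).2 ⟨h.conf_symm d e hde, he₁, hd₁⟩⟩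
      · exact (hres.blocked_of_mem_disabled hK hdD).1 hdC
    · exact hres.not_conf d hdC hd₁ e he₁ hde

end IsResidualAt

theorem RemovalJustified.residStep (hres : IsResidualAt R C R₁) (hj : RemovalJustified R C R₁)
    (hK : ∀ x ∈ R₁.committed A, Pinned R C x) : RemovalJustified R C (R₁.residStep A B) where
  removed d hd hd₂ := by
    by_cases hd₁ : d ∈ R₁.carrier
    · exact (mem_committed_or_disabled hd₁ hd₂).imp (hK d) (hres.blocked_of_mem_disabled hK)
    · exact hj.removed d hd hd₁
  frozen u hu hu₂ huF₂ := by
    have hu₁ : u ∈ R₁.carrier := residStep_carrier_subset hu₂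
    by_cases huF₁ : u ∈ R₁.F
    · by_contra hfr
      refine huF₂ (mem_residStep_F.2 ⟨huF₁, hu₂, fun a haD hau => ?_, fun a haK hau => ?_⟩)
      · exact hfr (Or.inl
          ⟨a, ((hres.rc_iff a u).1 hau).1, hres.blocked_of_mem_disabled hK haD⟩)
      · exact hfr (Or.inr ⟨a, ((hres.prev_iff a u).1 hau).1, hK a haK⟩)
    · exact hj.frozen u hu hu₁ huF₁

theorem residStep_of_enabled (h : R.IsRPES) (hcr : R.CauseRespecting)
    (hres : IsResidualAt R C R₁) (hj : RemovalJustified R C R₁) (hen : R.Enabled C A B) :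
    IsResidualAt R ((C \ B) ∪ A) (R₁.residStep A B) ∧
      RemovalJustified R ((C \ B) ∪ A) (R₁.residStep A B) := by
  have hA := hj.fst_subset hen
  have hres' := hres.step hen hA (hj.snd_subset h hen)
  have hj' := hj.step hen
  have hK := hj'.committed_pinned hcr hres.toIsRestriction hen hA
  exact ⟨hres'.residStep h hcr hA hK, hj'.residStep hres' hK⟩

theorem isResidualAt_resid (h : R.IsRPES) (hcr : R.CauseRespecting) {C C' : Set E} :
    ∀ {t : List (Set E × Set E)} {R₁ : RPESData E L}, R.IsTraceFrom C t C' →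
      IsResidualAt R C R₁ → RemovalJustified R C R₁ → R₁.C0 = C ∩ R₁.carrier →
      IsResidualAt R C' (R₁.resid t) ∧ (R₁.resid t).C0 = C' ∩ (R₁.resid t).carrier := by
  intro t
  induction t generalizing C with
  | nil => rintro R₁ rfl hres - hC0; exact ⟨hres, hC0⟩
  | cons p t ih =>
    rintro R₁ ⟨hen, htr⟩ hres hj hC0
    obtain ⟨hres', hj'⟩ := residStep_of_enabled h hcr hres hj hen
    exact ih htr hres' hj' (residStep_C0_eq hC0)

theorem IsResidualAt.exists_isTraceFrom (h : R.IsRPES) {C C₁ : Set E} :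
    ∀ {t : List (Set E × Set E)}, IsResidualAt R C R₁ →
      R₁.IsTraceFrom (C ∩ R₁.carrier) t C₁ → ∃ C', R.IsTraceFrom C t C' := by
  intro t
  induction t generalizing C with
  | nil => exact fun _ _ => ⟨C, rfl⟩
  | cons p t ih =>
    rintro hres ⟨hen₁, htr⟩
    have hA : p.1 ⊆ R₁.carrier := hen₁.fst_subset
    have hen := hres.enabled h hen₁
    have hres' := hres.step hen hA (hen₁.snd_subset.trans hres.F_subset_carrier)
    rw [Set.inter_sdiff_right_comm, ← Set.inter_eq_left.2 hA, ← Set.union_inter_distrib_right]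
      at htr
    obtain ⟨C', htr'⟩ := ih hres' htr
    exact ⟨C', hen, htr'⟩

end RPESData

/-- If `t ∈ Traces(R)`, `R' = R \ t` and `t' ∈ Traces(R')`, then
`tt' ∈ Traces(R)` and `R \ (tt') = R' \ t'`. -/
theorem trace_concat_resid {E L : Type} (R : RPESData E L) (h : R.IsRPES)
    (hcr : R.CauseRespecting) (t t' : List (Set E × Set E))
    (ht : R.IsTrace t) (ht' : (R.resid t).IsTrace t') :
    R.IsTrace (t ++ t') ∧ R.resid (t ++ t') = (R.resid t).resid t' := by
  obtain ⟨C, htC⟩ := ht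
  obtain ⟨C₁, ht'C₁⟩ := ht'
  obtain ⟨hres, hC0⟩ := RPESData.isResidualAt_resid h hcr htC h.isResidualAt_self
    (RPESData.removalJustified_self R R.C0) (Set.inter_eq_left.2 h.C0_carrier).symm
  rw [RPESData.IsTraceTo, hC0] at ht'C₁
  obtain ⟨C', htC'⟩ := hres.exists_isTraceFrom h ht'C₁
  exact ⟨⟨C', RPESData.isTraceFrom_append htC htC'⟩, R.resid_append t t'⟩
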